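/- Level-set equation via graph representation: Let u be a smooth convex function on Ω ⊂ ℝ^n, strictly increasing in the e_n direction, and let v(x_1,...,x_{n-1}, s) be defined by u(x_1,...,x_{n-1}, −v(x_1,...,x_{n-1},s)) = s (the graph of the s-level set of u in the −e_n direction). If u_n^α det D²u = f(x_2,...,x_{n-1}, u), then v satisfies det D²v = f(x_2,...,x_{n-1}, x_n) |v_n|^{n+2+α} with v_n < 0, where after relabeling the s-variable is called x_n. -/

import Mathlib

open Matrix

noncomputable def pderiv' {n : ℕ} (i : Fin n) (u : (Fin n → ℝ) → ℝ) (x : Fin n → ℝ) : ℝ :=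
  fderiv ℝ u x (Pi.single i 1)

noncomputable def hess {n : ℕ} (u : (Fin n → ℝ) → ℝ) (x : Fin n → ℝ) :
    Matrix (Fin n) (Fin n) ℝ :=
  Matrix.of fun i j => pderiv' j (pderiv' i u) x

/-- The derivative of the map `q ↦ Function.update q e (-(v q))`. -/
noncomputable def Lmap {n : ℕ} (e : Fin n) (ℓ : (Fin n → ℝ) →L[ℝ] ℝ) :
    (Fin n → ℝ) →L[ℝ] (Fin n → ℝ) :=
  ContinuousLinearMap.pi (fun k => if k = e then -ℓ else ContinuousLinearMap.proj k)

lemma hasFDerivAt_phi {n : ℕ} (e : Fin n) (v : (Fin n → ℝ) → ℝ) (q : Fin n → ℝ)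
    (hv : DifferentiableAt ℝ v q) :
    HasFDerivAt (fun r => Function.update r e (-(v r))) (Lmap e (fderiv ℝ v q)) q := by
  apply hasFDerivAt_pi''
  intro k
  have hproj : (ContinuousLinearMap.proj k).comp (Lmap e (fderiv ℝ v q)) =
      (if k = e then -(fderiv ℝ v q) else ContinuousLinearMap.proj k) := by
    ext w
    simp [Lmap]
  rw [hproj]
  by_cases hk : k = e
  · subst hk
    simp only [if_pos rfl]
    have hfun : (fun r : Fin n → ℝ => Function.update r k (-(v r)) k) = fun r => -(v r) := by
      funext r; simp
    rw [hfun]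
    exact hv.hasFDerivAt.neg
  · simp only [if_neg hk]
    have hfun : (fun r : Fin n → ℝ => Function.update r e (-(v r)) k) = fun r => r k := by
      funext r; simp [Function.update_of_ne hk]
    rw [hfun]
    exact hasFDerivAt_apply k q

lemma Lmap_single {n : ℕ} (e j : Fin n) (ℓ : (Fin n → ℝ) →L[ℝ] ℝ) :
    Lmap e ℓ (Pi.single j 1) =
      (if j = e then 0 else Pi.single j (1 : ℝ)) +
        (-(ℓ (Pi.single j 1))) • (Pi.single e (1 : ℝ) : Fin n → ℝ) := by
  funext k
  simp only [Lmap, ContinuousLinearMap.pi_apply, Pi.add_apply, Pi.smul_apply, smul_eq_mul,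
    ContinuousLinearMap.neg_apply, ContinuousLinearMap.proj_apply, ite_apply,
    Pi.single_apply, Pi.zero_apply]
  split_ifs <;> simp_all <;> ring

lemma clm_Lmap_single {n : ℕ} (e j : Fin n) (C : (Fin n → ℝ) →L[ℝ] ℝ)
    (ℓ : (Fin n → ℝ) →L[ℝ] ℝ) :
    C (Lmap e ℓ (Pi.single j 1)) =
      (if j = e then 0 else C (Pi.single j 1)) - ℓ (Pi.single j 1) * C (Pi.single e 1) := by
  rw [Lmap_single, map_add, _root_.map_smul]
  by_cases hj : j = e
  · simp [hj, sub_eq_add_neg, smul_eq_mul]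
  · simp only [if_neg hj, smul_eq_mul]
    ring

/-- level-set equation via graph representation.  Let `u` be smooth convex on
`Ω`, strictly increasing in the `eₙ` direction (`uₙ > 0`), with
`uₙ^α det D²u = f(x₂,…,x_{n-1}, u)` (`f` independent of `x₁`; its last slot carries the
value of `u`).  If `v(x₁,…,x_{n-1}, s)` is defined by
`u(x₁,…,x_{n-1}, −v(x₁,…,x_{n-1},s)) = s` on an open set `D`, then
`det D²v = f(x₂,…,x_{n-1}, xₙ) |vₙ|^{n+2+α}` with `vₙ < 0` (the `s`-variable being
relabeled as `xₙ`). -/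
theorem stmt8 (n : ℕ) (hn : 2 ≤ n) (α : ℝ) (hα : 0 ≤ α)
    (Ω D : Set (Fin n → ℝ)) (hΩ : IsOpen Ω) (hD : IsOpen D)
    (u v f : (Fin n → ℝ) → ℝ)
    (hu : ContDiffOn ℝ (⊤ : ℕ∞) u Ω) (hΩconv : Convex ℝ Ω) (huconv : ConvexOn ℝ Ω u)
    (hun : ∀ x ∈ Ω, 0 < pderiv' ⟨n - 1, by omega⟩ u x)
    (hf : ∀ x y : Fin n → ℝ, (∀ i : Fin n, i ≠ ⟨0, by omega⟩ → x i = y i) → f x = f y)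
    (heq : ∀ x ∈ Ω, (pderiv' ⟨n - 1, by omega⟩ u x) ^ α * (hess u x).det =
      f (Function.update x ⟨n - 1, by omega⟩ (u x)))
    (hv : ContDiffOn ℝ (⊤ : ℕ∞) v D)
    (hgraph : ∀ p ∈ D, Function.update p ⟨n - 1, by omega⟩ (-(v p)) ∈ Ω ∧
      u (Function.update p ⟨n - 1, by omega⟩ (-(v p))) = p ⟨n - 1, by omega⟩) :
    ∀ p ∈ D, pderiv' ⟨n - 1, by omega⟩ v p < 0 ∧
      (hess v p).det = f p * |pderiv' ⟨n - 1, by omega⟩ v p| ^ ((n : ℝ) + 2 + α) := by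
  have hn1 : n - 1 < n := by omega
  set e : Fin n := ⟨n - 1, hn1⟩ with he
  set φ : (Fin n → ℝ) → (Fin n → ℝ) := fun q => Function.update q e (-(v q)) with hφ
  have hvdiff : ∀ q ∈ D, DifferentiableAt ℝ v q := fun q hq =>
    (hv.contDiffAt (hD.mem_nhds hq)).differentiableAt (by simp)
  have hφd : ∀ q ∈ D, HasFDerivAt φ (Lmap e (fderiv ℝ v q)) q := fun q hq =>
    hasFDerivAt_phi e v q (hvdiff q hq)
  have hxΩ : ∀ q ∈ D, φ q ∈ Ω := fun q hq => (hgraph q hq).1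
  have hux : ∀ q ∈ D, u (φ q) = q e := fun q hq => (hgraph q hq).2
  have hudiff : ∀ y ∈ Ω, DifferentiableAt ℝ u y := fun y hy =>
    (hu.contDiffAt (hΩ.mem_nhds hy)).differentiableAt (by simp)
  -- first-order identity
  have key1 : ∀ q ∈ D, ∀ j : Fin n,
      (if j = e then 0 else pderiv' j u (φ q)) - pderiv' j v q * pderiv' e u (φ q) =
        (if j = e then (1 : ℝ) else 0) := by
    intro q hq j
    have hcomp : HasFDerivAt (u ∘ φ)
        ((fderiv ℝ u (φ q)).comp (Lmap e (fderiv ℝ v q))) q :=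
      ((hudiff (φ q) (hxΩ q hq)).hasFDerivAt).comp q (hφd q hq)
    have hev : (u ∘ φ) =ᶠ[nhds q] (fun r => r e) :=
      Filter.eventuallyEq_of_mem (hD.mem_nhds hq) (fun r hr => hux r hr)
    have h2 : HasFDerivAt (fun r : Fin n → ℝ => r e)
        ((fderiv ℝ u (φ q)).comp (Lmap e (fderiv ℝ v q))) q :=
      hcomp.congr_of_eventuallyEq hev.symm
    have h3 := (hasFDerivAt_apply e q).unique h2
    have h4 := DFunLike.congr_fun h3 (Pi.single j (1 : ℝ))
    rw [ContinuousLinearMap.comp_apply, clm_Lmap_single,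
      ContinuousLinearMap.proj_apply] at h4
    unfold pderiv'
    rw [← h4]
    by_cases hj : j = e
    · subst hj; simp
    · simp [Pi.single_apply, hj]
  have Ia : ∀ q ∈ D, pderiv' e v q * pderiv' e u (φ q) = -1 := by
    intro q hq
    have h := key1 q hq e
    rw [if_pos rfl, if_pos rfl] at h
    linarith
  have Ib : ∀ q ∈ D, ∀ j : Fin n, j ≠ e →
      pderiv' j u (φ q) = pderiv' j v q * pderiv' e u (φ q) := by
    intro q hq j hj
    have h := key1 q hq j
    simp only [if_neg hj] at h
    linarith
  intro p hp
  have hUpos : 0 < pderiv' e u (φ p) := hun (φ p) (hxΩ p hp)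
  have hIa : pderiv' e v p * pderiv' e u (φ p) = -1 := Ia p hp
  have hwe : pderiv' e v p < 0 := by nlinarith
  refine ⟨hwe, ?_⟩
  -- differentiability of the partials
  have hcu : ContDiffAt ℝ (⊤ : ℕ∞) u (φ p) := hu.contDiffAt (hΩ.mem_nhds (hxΩ p hp))
  have hgdiff : ∀ k : Fin n, DifferentiableAt ℝ (pderiv' k u) (φ p) := fun k =>
    ((hcu.fderiv_right (m := 1) (by exact WithTop.coe_le_coe.mpr le_top)).clm_apply contDiffAt_const).differentiableAt one_ne_zero
  have hcv : ContDiffAt ℝ (⊤ : ℕ∞) v p := hv.contDiffAt (hD.mem_nhds hp)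
  have hvd2 : ∀ k : Fin n, DifferentiableAt ℝ (pderiv' k v) p := fun k =>
    ((hcv.fderiv_right (m := 1) (by exact WithTop.coe_le_coe.mpr le_top)).clm_apply contDiffAt_const).differentiableAt one_ne_zero
  have hG : ∀ k : Fin n, HasFDerivAt (fun q => pderiv' k u (φ q))
      ((fderiv ℝ (pderiv' k u) (φ p)).comp (Lmap e (fderiv ℝ v p))) p := fun k =>
    ((hgdiff k).hasFDerivAt).comp p (hφd p hp)
  set M : Matrix (Fin n) (Fin n) ℝ := hess u (φ p) with hM
  set P : Fin n → Fin n → ℝ :=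
    fun k i => (if i = e then 0 else M k i) - pderiv' i v p * M k e with hP
  have hPk : ∀ k i : Fin n,
      ((fderiv ℝ (pderiv' k u) (φ p)).comp (Lmap e (fderiv ℝ v p))) (Pi.single i 1)
        = P k i := by
    intro k i
    rw [ContinuousLinearMap.comp_apply, clm_Lmap_single]
    rfl
  -- second-order identity
  have key2 : ∀ j i : Fin n, pderiv' e u (φ p) * hess v p j i =
      (if j = e then 0 else P j i) - pderiv' j v p * P e i := by
    intro j i
    by_cases hj : j = e
    · subst hj
      have hmul : HasFDerivAt (fun q => pderiv' e v q * pderiv' e u (φ q))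
          (pderiv' e v p • ((fderiv ℝ (pderiv' e u) (φ p)).comp (Lmap e (fderiv ℝ v p))) +
            pderiv' e u (φ p) • fderiv ℝ (pderiv' e v) p) p :=
        ((hvd2 e).hasFDerivAt).mul (hG e)
      have hev : (fun q => pderiv' e v q * pderiv' e u (φ q)) =ᶠ[nhds p]
          (fun _ => (-1 : ℝ)) :=
        Filter.eventuallyEq_of_mem (hD.mem_nhds hp) (fun r hr => Ia r hr)
      have hconst : HasFDerivAt (fun _ : Fin n → ℝ => (-1 : ℝ))
          (pderiv' e v p • ((fderiv ℝ (pderiv' e u) (φ p)).comp (Lmap e (fderiv ℝ v p))) +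
            pderiv' e u (φ p) • fderiv ℝ (pderiv' e v) p) p :=
        hmul.congr_of_eventuallyEq hev.symm
      have h0 := (hasFDerivAt_const (-1 : ℝ) p).unique hconst
      have h4 := DFunLike.congr_fun h0 (Pi.single i (1 : ℝ))
      simp only [ContinuousLinearMap.zero_apply, ContinuousLinearMap.add_apply,
        ContinuousLinearMap.smul_apply, smul_eq_mul] at h4
      rw [hPk e i] at h4
      have hhv : fderiv ℝ (pderiv' e v) p (Pi.single i 1) = hess v p e i := rfl
      rw [hhv] at h4
      rw [if_pos rfl]
      linarith
    · have hmul : HasFDerivAt (fun q => pderiv' j v q * pderiv' e u (φ q))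
          (pderiv' j v p • ((fderiv ℝ (pderiv' e u) (φ p)).comp (Lmap e (fderiv ℝ v p))) +
            pderiv' e u (φ p) • fderiv ℝ (pderiv' j v) p) p :=
        ((hvd2 j).hasFDerivAt).mul (hG e)
      have hev : (fun q => pderiv' j u (φ q)) =ᶠ[nhds p]
          (fun q => pderiv' j v q * pderiv' e u (φ q)) :=
        Filter.eventuallyEq_of_mem (hD.mem_nhds hp) (fun r hr => Ib r hr j hj)
      have hGj : HasFDerivAt (fun q => pderiv' j v q * pderiv' e u (φ q))
          ((fderiv ℝ (pderiv' j u) (φ p)).comp (Lmap e (fderiv ℝ v p))) p :=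
        (hG j).congr_of_eventuallyEq hev.symm
      have h0 := hmul.unique hGj
      have h4 := DFunLike.congr_fun h0 (Pi.single i (1 : ℝ))
      simp only [ContinuousLinearMap.add_apply, ContinuousLinearMap.smul_apply,
        smul_eq_mul] at h4
      rw [hPk e i, hPk j i] at h4
      have hhv : fderiv ℝ (pderiv' j v) p (Pi.single i 1) = hess v p j i := rfl
      rw [hhv] at h4
      simp only [if_neg hj]
      linarith
  -- entrywise formula for the Hessian of v
  have hhess : ∀ j i : Fin n, hess v p j i =
      -(pderiv' e v p) * ((if j = e then 0 else P j i) - pderiv' j v p * P e i) := by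
    intro j i
    have h1 := key2 j i
    linear_combination (-(pderiv' e v p)) * h1 + (hess v p j i) * hIa
  -- the matrix identity
  set B : Matrix (Fin n) (Fin n) ℝ :=
    (1 : Matrix (Fin n) (Fin n) ℝ).updateCol e (fun j => -(pderiv' j v p)) with hB
  have hMB : ∀ k i : Fin n, (M * Bᵀ) k i = P k i := by
    intro k i
    rw [Matrix.mul_apply]
    have hterm : ∀ l : Fin n, M k l * Bᵀ l i =
        (if l = e then -(pderiv' i v p) * M k e else 0) +
          (if l = i then (if i = e then 0 else M k i) else 0) := by
      intro l
      simp only [Matrix.transpose_apply, hB, Matrix.updateCol_apply, Matrix.one_apply]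
      rcases eq_or_ne l e with hle | hle
      · subst hle
        rcases eq_or_ne e i with hli | hli
        · subst hli
          rw [if_pos rfl, if_pos rfl, if_pos rfl, if_pos rfl]
          ring
        · rw [if_pos rfl, if_pos rfl, if_neg hli]
          ring
      · rcases eq_or_ne l i with hli | hli
        · subst hli
          rw [if_neg hle, if_pos rfl, if_neg hle, if_pos rfl, if_neg hle]
          ring
        · rw [if_neg hle, if_neg (Ne.symm hli), if_neg hle, if_neg hli]
          ring
    rw [Finset.sum_congr rfl (fun l _ => hterm l), Finset.sum_add_distrib,
      Finset.sum_ite_eq', Finset.sum_ite_eq']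
    simp only [Finset.mem_univ, if_pos, hP]
    ring
  have hBMB : ∀ j i : Fin n, (B * (M * Bᵀ)) j i =
      (if j = e then 0 else P j i) - pderiv' j v p * P e i := by
    intro j i
    rw [Matrix.mul_apply]
    have hterm : ∀ k : Fin n, B j k * (M * Bᵀ) k i =
        (if k = e then -(pderiv' j v p) * P e i else 0) +
          (if k = j then (if j = e then 0 else P j i) else 0) := by
      intro k
      simp only [hB, Matrix.updateCol_apply, Matrix.one_apply]
      rw [hMB k i]
      rcases eq_or_ne k e with hke | hke
      · subst hke
        rcases eq_or_ne e j with hkj | hkj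
        · subst hkj
          rw [if_pos rfl, if_pos rfl, if_pos rfl, if_pos rfl]
          ring
        · rw [if_pos rfl, if_pos rfl, if_neg hkj]
          ring
      · rcases eq_or_ne k j with hkj | hkj
        · subst hkj
          rw [if_neg hke, if_pos rfl, if_neg hke, if_pos rfl, if_neg hke]
          ring
        · rw [if_neg hke, if_neg (Ne.symm hkj), if_neg hke, if_neg hkj]
          ring
    rw [Finset.sum_congr rfl (fun k _ => hterm k), Finset.sum_add_distrib,
      Finset.sum_ite_eq', Finset.sum_ite_eq']
    simp only [Finset.mem_univ, if_pos]
    ring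
  have hmat : hess v p = (-(pderiv' e v p)) • (B * M * Bᵀ) := by
    ext j i
    rw [Matrix.smul_apply, Matrix.mul_assoc, smul_eq_mul, hBMB j i, hhess j i]
  have hdetB : B.det = -(pderiv' e v p) := by
    rw [hB, ← Matrix.cramer_apply, Matrix.cramer_one]
    rfl
  have hdet1 : (hess v p).det =
      (-(pderiv' e v p)) ^ n * (B.det * M.det * B.det) := by
    rw [hmat, Matrix.det_smul, Matrix.det_mul, Matrix.det_mul, Matrix.det_transpose]
    simp [Fintype.card_fin]
  -- the PDE for u at φ p
  have hdetM : (pderiv' e u (φ p)) ^ α * M.det = f p := by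
    have h := heq (φ p) (hxΩ p hp)
    have hupd : Function.update (φ p) e (u (φ p)) = p := by
      rw [hux p hp]
      show Function.update (Function.update p e (-(v p))) e (p e) = p
      rw [Function.update_idem, Function.update_eq_self]
    rw [hupd] at h
    exact h
  have hwepos : 0 < -(pderiv' e v p) := by linarith
  have hone : (pderiv' e u (φ p)) ^ α * (-(pderiv' e v p)) ^ α = 1 := by
    rw [← Real.mul_rpow (le_of_lt hUpos) (le_of_lt hwepos)]
    have h1 : pderiv' e u (φ p) * -(pderiv' e v p) = 1 := by nlinarith
    rw [h1, Real.one_rpow]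
  have hMdet : M.det = f p * (-(pderiv' e v p)) ^ α := by
    linear_combination (-(pderiv' e v p)) ^ α * hdetM - M.det * hone
  have final : (hess v p).det = f p * |pderiv' e v p| ^ ((n : ℝ) + 2 + α) := by
    rw [hdet1, hdetB, hMdet, abs_of_neg hwe]
    rw [Real.rpow_add hwepos]
    have hcast : ((n : ℝ) + 2) = ((n + 2 : ℕ) : ℝ) := by push_cast; ring
    rw [hcast, Real.rpow_natCast]
    ring
  exact final
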